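/- Let f: int K → ℝ be a self-concordant function with constant M_f > 0, and let x, w ∈ int K with r := ‖x - w‖_{∇²f(x)} < 1/M_f. Then ‖∇f(x) - ∇f(w)‖²_{∇²f(x)^{-1}} ≤ (1/(1 - M_f·r)²)·‖w - x‖²_{∇²f(x)}. -/

import Mathlib

open Matrix Filter Topology

/-- `‖v‖_A = √(vᵀAv)`, the local norm induced by a matrix `A`. -/
noncomputable def qnorm {d : ℕ} (A : Matrix (Fin d) (Fin d) ℝ) (v : Fin d → ℝ) : ℝ :=
  Real.sqrt (v ⬝ᵥ A.mulVec v)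

/-- `f` is a self-concordant function on `int K` with constant `M`, with Hessian given
by the (symmetric) matrix field `hess`: `f` is convex and `C³` on `int K`, `hess` is its
Hessian, `f` blows up along any sequence converging to a boundary point of `K`, and the
third derivative is controlled by the local norm:
`|∇³f(x)[u,u,u]| ≤ 2·M·‖u‖³_{∇²f(x)}`. -/
def SelfConcordantWith {d : ℕ} (K : Set (Fin d → ℝ)) (f : (Fin d → ℝ) → ℝ)
    (hess : (Fin d → ℝ) → Matrix (Fin d) (Fin d) ℝ) (M : ℝ) : Prop :=
  ConvexOn ℝ (interior K) f ∧
  ContDiffOn ℝ 3 f (interior K) ∧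
  (∀ x ∈ interior K, (hess x).IsHermitian) ∧
  (∀ x ∈ interior K, ∀ u, (iteratedFDeriv ℝ 2 f x fun _ => u) = u ⬝ᵥ (hess x).mulVec u) ∧
  (∀ x ∈ frontier K, ∀ s : ℕ → Fin d → ℝ, (∀ n, s n ∈ interior K) →
      Tendsto s atTop (nhds x) → Tendsto (fun n => f (s n)) atTop atTop) ∧
  (∀ x ∈ interior K, ∀ u, |iteratedFDeriv ℝ 3 f x fun _ => u| ≤ 2 * M * qnorm (hess x) u ^ 3)

/-- `grad` is the gradient field of `f` on `int K`. -/
def GradOf {d : ℕ} (K : Set (Fin d → ℝ)) (f : (Fin d → ℝ) → ℝ)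
    (grad : (Fin d → ℝ) → (Fin d → ℝ)) : Prop :=
  ∀ x ∈ interior K, ∀ u, fderiv ℝ f x u = grad x ⬝ᵥ u


/-!
Along the segment `x + t • (w - x)` self-concordance controls the third derivative of `f`. On the
diagonal this is the hypothesis; for the mixed term `∇³f[h, v, v]` it follows from Banach's
theorem that a symmetric trilinear form on a Euclidean space attains its norm on the diagonal,
applied to the inner product `⟪a, b⟫ = aᵀ ∇²f(y) b`. Integrating the resulting differential
inequalities gives `‖h‖_{x+th} ≤ r / (1 - tMr)` and `‖v‖_{x+th} ≤ ‖v‖_x / (1 - tMr)`, hence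
`|⟪∇f(w) - ∇f(x), v⟫| ≤ r ‖v‖_x / (1 - Mr)`. For `v = ∇²f(x)⁻¹ (∇f(x) - ∇f(w))` the left side
is `‖∇f(x) - ∇f(w)‖²_{∇²f(x)⁻¹}` and `‖v‖_x = ‖∇f(x) - ∇f(w)‖_{∇²f(x)⁻¹}`.
-/

section Comparison

open Set

theorem one_sub_mul_pos_of_mem_Icc {q t : ℝ} (hq : q < 1) (ht : t ∈ Icc (0 : ℝ) 1) :
    0 < 1 - t * q := by
  rcases le_or_gt q 0 with h | h
  · nlinarith [ht.1]
  · nlinarith [ht.2]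

theorem le_div_one_sub_mul_of_hasDerivAt {s s' : ℝ → ℝ} {M : ℝ}
    (hs : ∀ t ∈ Icc (0 : ℝ) 1, HasDerivAt s (s' t) t) (hpos : ∀ t ∈ Icc (0 : ℝ) 1, 0 < s t)
    (hs' : ∀ t ∈ Icc (0 : ℝ) 1, s' t ≤ M * s t ^ 2) (hM : M * s 0 < 1) {t : ℝ}
    (ht : t ∈ Icc (0 : ℝ) 1) : s t ≤ s 0 / (1 - t * (M * s 0)) := by
  have hg : ∀ τ ∈ Icc (0 : ℝ) 1,
      HasDerivAt (fun τ => (s τ)⁻¹ + M * τ) (-s' τ / s τ ^ 2 + M) τ := fun τ hτ =>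
    (((hs τ hτ).inv (hpos τ hτ).ne').add ((hasDerivAt_id τ).const_mul M)).congr_deriv (by simp)
  have hmono : MonotoneOn (fun τ => (s τ)⁻¹ + M * τ) (Icc 0 1) :=
    monotoneOn_of_hasDerivWithinAt_nonneg (convex_Icc 0 1)
      (fun τ hτ => (hg τ hτ).continuousAt.continuousWithinAt)
      (fun τ hτ => (hg τ (interior_subset hτ)).hasDerivWithinAt) fun τ hτ => by
        have hτ := interior_subset hτ
        have := hpos τ hτ
        rw [neg_div, neg_add_eq_sub, sub_nonneg, div_le_iff₀ (by positivity)]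
        exact hs' τ hτ
  have h0t := hmono ⟨le_rfl, zero_le_one⟩ ht ht.1
  simp only [mul_zero, add_zero] at h0t
  have hs0 := hpos 0 ⟨le_rfl, zero_le_one⟩
  have hst := hpos t ht
  rw [le_div_iff₀ (one_sub_mul_pos_of_mem_Icc hM ht)]
  calc s t * (1 - t * (M * s 0)) = s 0 * s t * ((s 0)⁻¹ - M * t) := by field_simp
    _ ≤ s 0 * s t * (s t)⁻¹ := by gcongr; linarith
    _ = s 0 := by field_simp

theorem mul_one_sub_mul_sq_le_of_hasDerivAt {α α' : ℝ → ℝ} {q : ℝ}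
    (hα : ∀ t ∈ Icc (0 : ℝ) 1, HasDerivAt α (α' t) t) (hq : q < 1)
    (hα' : ∀ t ∈ Icc (0 : ℝ) 1, α' t * (1 - t * q) ≤ 2 * q * α t) {t : ℝ}
    (ht : t ∈ Icc (0 : ℝ) 1) : α t * (1 - t * q) ^ 2 ≤ α 0 := by
  have hg : ∀ τ ∈ Icc (0 : ℝ) 1, HasDerivAt (fun τ => α τ * (1 - τ * q) ^ 2)
      ((1 - τ * q) * (α' τ * (1 - τ * q) - 2 * q * α τ)) τ := fun τ hτ =>
    ((hα τ hτ).mul ((((hasDerivAt_id τ).mul_const q).const_sub 1).pow 2)).congr_deriv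
      (by simp; ring)
  have hanti : AntitoneOn (fun τ => α τ * (1 - τ * q) ^ 2) (Icc 0 1) :=
    antitoneOn_of_hasDerivWithinAt_nonpos (convex_Icc 0 1)
      (fun τ hτ => (hg τ hτ).continuousAt.continuousWithinAt)
      (fun τ hτ => (hg τ (interior_subset hτ)).hasDerivWithinAt) fun τ hτ =>
        mul_nonpos_of_nonneg_of_nonpos (one_sub_mul_pos_of_mem_Icc hq (interior_subset hτ)).le
          (sub_nonpos.mpr (hα' τ (interior_subset hτ)))
  simpa using hanti ⟨le_rfl, zero_le_one⟩ ht ht.1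

theorem abs_sub_le_div_one_sub_of_hasDerivAt {ψ ψ' : ℝ → ℝ} {C q : ℝ}
    (hψ : ∀ t ∈ Icc (0 : ℝ) 1, HasDerivAt ψ (ψ' t) t) (hq : q < 1)
    (hψ' : ∀ t ∈ Icc (0 : ℝ) 1, |ψ' t| ≤ C / (1 - t * q) ^ 2) :
    |ψ 1 - ψ 0| ≤ C / (1 - q) := by
  have hB : ∀ t ∈ Icc (0 : ℝ) 1,
      HasDerivAt (fun t => C * t / (1 - t * q)) (C / (1 - t * q) ^ 2) t := fun t ht =>
    (((hasDerivAt_id t).const_mul C).div (((hasDerivAt_id t).mul_const q).const_sub 1)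
      (one_sub_mul_pos_of_mem_Icc hq ht).ne').congr_deriv (by simp only [id]; field_simp; ring)
  have := image_norm_le_of_norm_deriv_right_le_deriv_boundary' (f := fun t => ψ t - ψ 0)
    (a := 0) (b := 1) (B := fun t => C * t / (1 - t * q))
    (fun t ht => ((hψ t ht).sub_const _).continuousAt.continuousWithinAt)
    (fun t ht => ((hψ t (Ico_subset_Icc_self ht)).sub_const _).hasDerivWithinAt)
    (by simp) (fun t ht => (hB t ht).continuousAt.continuousWithinAt)
    (fun t ht => (hB t (Ico_subset_Icc_self ht)).hasDerivWithinAt)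
    (fun t ht => hψ' t (Ico_subset_Icc_self ht)) (right_mem_Icc.mpr zero_le_one)
  simpa using this

end Comparison

section Trigonometry

open Real

/-- At `φ = θ / 3` and `φ = θ / 3 - 2π / 3` the cosine term equals `ρ`, while `sin φ` has opposite
signs there, so a positive combination of the two inequalities eliminates `L`. -/
theorem le_of_forall_mul_cos_add_mul_sin_pow_three_le {ρ θ L c : ℝ} (hθ₀ : 0 ≤ θ) (hθπ : θ ≤ π)
    (h : ∀ φ, ρ * cos (3 * φ - θ) + L * sin φ ^ 3 ≤ c) : ρ ≤ c := by
  have h₁ := h (θ / 3)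
  have h₂ := h (θ / 3 - 2 * π / 3)
  rw [show 3 * (θ / 3) - θ = 0 by ring, cos_zero] at h₁
  rw [show 3 * (θ / 3 - 2 * π / 3) - θ = -(2 * π) by ring, cos_neg, cos_two_pi] at h₂
  have hs₁ : 0 ≤ sin (θ / 3) := sin_nonneg_of_nonneg_of_le_pi (by linarith) (by linarith [pi_pos])
  have hs₂ : sin (θ / 3 - 2 * π / 3) < 0 :=
    sin_neg_of_neg_of_neg_pi_lt (by linarith [pi_pos]) (by linarith [pi_pos])
  have hs₁' := pow_nonneg hs₁ 3
  have hs₂' : 0 < -sin (θ / 3 - 2 * π / 3) ^ 3 := by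
    rw [← Odd.neg_pow (by decide)]
    exact pow_pos (neg_pos.mpr hs₂) 3
  nlinarith [mul_le_mul_of_nonneg_left h₁ hs₂'.le, mul_le_mul_of_nonneg_left h₂ hs₁']

end Trigonometry

def IsSymmTrilinear {R M : Type*} [CommSemiring R] [AddCommMonoid M] [Module R M]
    (B : M →ₗ[R] M →ₗ[R] M →ₗ[R] R) : Prop :=
  (∀ a b c, B a b c = B b a c) ∧ ∀ a b c, B a b c = B a c b

theorem IsSymmTrilinear.apply_add_smul_cube {R M : Type*} [CommSemiring R] [AddCommMonoid M]
    [Module R M] {B : M →ₗ[R] M →ₗ[R] M →ₗ[R] R} (hB : IsSymmTrilinear B) (a b : R) (u v : M) :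
    B (a • u + b • v) (a • u + b • v) (a • u + b • v) =
      a ^ 3 * B u u u + 3 * a ^ 2 * b * B u u v + 3 * a * b ^ 2 * B u v v + b ^ 3 * B v v v := by
  have e₁ : B u v u = B u u v := (hB.2 _ _ _).symm
  have e₂ : B v u u = B u u v := by rw [hB.1, hB.2]
  have e₃ : B v u v = B u v v := (hB.1 _ _ _).symm
  have e₄ : B v v u = B u v v := by rw [hB.2, hB.1]
  simp only [map_add, map_smul, LinearMap.add_apply, LinearMap.smul_apply, smul_eq_mul, e₁, e₂,
    e₃, e₄]
  ring

section InnerProductSpace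

open Real InnerProductSpace

variable {E : Type*} [NormedAddCommGroup E] [InnerProductSpace ℝ E]

theorem LinearMap.apply_eq_mul_inner_of_le_of_apply_eq [FiniteDimensional ℝ E] (ℓ : E →ₗ[ℝ] ℝ)
    {w : E} {ρ : ℝ} (hw : ‖w‖ = 1) (hℓw : ℓ w = ρ) (hle : ∀ y, ‖y‖ = 1 → ℓ y ≤ ρ) (z : E) :
    ℓ z = ρ * ⟪w, z⟫_ℝ := by
  set g := (toDual ℝ E).symm (LinearMap.toContinuousLinearMap ℓ)
  have hg : ∀ y, ⟪g, y⟫_ℝ = ℓ y := fun y => by simp [g, toDual_symm_apply]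
  have hgw : ⟪g, w⟫_ℝ = ρ := (hg w).trans hℓw
  have hgρ : ‖g‖ ≤ ρ := by
    rcases eq_or_ne g 0 with h0 | h0
    · simp [← hgw, h0]
    · have hpos : 0 < ‖g‖ := norm_pos_iff.mpr h0
      calc ‖g‖ = ⟪g, ‖g‖⁻¹ • g⟫_ℝ := by
            rw [real_inner_smul_right, real_inner_self_eq_norm_sq]; field_simp
        _ ≤ ρ := (hg _).trans_le
            (hle _ (by rw [norm_smul, norm_inv, norm_norm, inv_mul_cancel₀ hpos.ne']))
  -- `‖g‖ ≤ ρ = ⟪g, w⟫` with `‖w‖ = 1` is the equality case of Cauchy–Schwarz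
  have hgeq : g = ρ • w := by
    rw [← sub_eq_zero, ← norm_le_zero_iff, ← sq_le_sq₀ (norm_nonneg _) le_rfl, norm_sub_sq_real,
      real_inner_smul_right, norm_smul, hgw, hw, Real.norm_eq_abs, mul_one, sq_abs]
    nlinarith [norm_nonneg g]
  rw [← hg, hgeq, real_inner_smul_left]

theorem LinearMap.abs_apply_le_of_forall_norm_eq_one (B : E →ₗ[ℝ] E →ₗ[ℝ] E →ₗ[ℝ] ℝ) {ρ : ℝ}
    (h : ∀ a b : E, ‖a‖ = 1 → ‖b‖ = 1 → |B a a b| ≤ ρ) (x y : E) :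
    |B x x y| ≤ ρ * (‖x‖ ^ 2 * ‖y‖) := by
  rcases eq_or_ne x 0 with rfl | hx
  · simp
  rcases eq_or_ne y 0 with rfl | hy
  · simp
  have hunit : ∀ z : E, z ≠ 0 → ‖‖z‖⁻¹ • z‖ = 1 := fun z hz => by
    rw [norm_smul, norm_inv, norm_norm, inv_mul_cancel₀ (norm_ne_zero_iff.mpr hz)]
  have key := h _ _ (hunit x hx) (hunit y hy)
  simp only [map_smul, LinearMap.smul_apply, smul_eq_mul, abs_mul, abs_inv, abs_norm] at key
  have hx' : 0 < ‖x‖ := norm_pos_iff.mpr hx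
  have hy' : 0 < ‖y‖ := norm_pos_iff.mpr hy
  have e : |B x x y| = ‖x‖ ^ 2 * ‖y‖ * (‖x‖⁻¹ * (‖x‖⁻¹ * (‖y‖⁻¹ * |B x x y|))) := by
    field_simp
  rw [e, mul_comm ρ]
  gcongr
  linarith

variable {B : E →ₗ[ℝ] E →ₗ[ℝ] E →ₗ[ℝ] ℝ}

theorem IsSymmTrilinear.le_of_orthonormal (hB : IsSymmTrilinear B) {c ρ θ : ℝ}
    (hc : ∀ u, |B u u u| ≤ c * ‖u‖ ^ 3) {u v : E} (hu : ‖u‖ = 1) (hv : ‖v‖ = 1)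
    (huv : ⟪u, v⟫_ℝ = 0) (hθ₀ : 0 ≤ θ) (hθπ : θ ≤ π) (huuu : B u u u = ρ * cos θ)
    (huuv : B u u v = ρ * sin θ) (huvv : B u v v = -(ρ * cos θ)) : ρ ≤ c := by
  refine le_of_forall_mul_cos_add_mul_sin_pow_three_le (L := ρ * sin θ + B v v v) hθ₀ hθπ
    fun φ => ?_
  have he : ‖cos φ • u + sin φ • v‖ = 1 := by
    have h0 : ⟪cos φ • u, sin φ • v⟫_ℝ = 0 := by
      rw [real_inner_smul_left, real_inner_smul_right, huv, mul_zero, mul_zero]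
    rw [← sq_eq_sq₀ (norm_nonneg _) zero_le_one, norm_add_sq_real, h0, norm_smul, norm_smul, hu,
      hv, Real.norm_eq_abs, Real.norm_eq_abs, mul_one, mul_one, sq_abs, sq_abs, mul_zero,
      add_zero, cos_sq_add_sin_sq, one_pow]
  have hcube : B (cos φ • u + sin φ • v) (cos φ • u + sin φ • v) (cos φ • u + sin φ • v) =
      ρ * cos (3 * φ - θ) + (ρ * sin θ + B v v v) * sin φ ^ 3 := by
    rw [hB.apply_add_smul_cube, huuu, huuv, huvv, cos_sub, cos_three_mul, sin_three_mul]
    linear_combination (3 * ρ * sin θ * sin φ - 3 * ρ * cos θ * cos φ) * sin_sq_add_cos_sq φ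
  rw [← hcube]
  exact (le_abs_self _).trans (by simpa [he] using hc (cos φ • u + sin φ • v))

/-- The hypotheses `huu` and `huw` are the first-order conditions at a pair of unit vectors
maximizing `B a a b`, with maximum `ρ`. -/
theorem IsSymmTrilinear.le_of_apply_eq_mul_inner (hB : IsSymmTrilinear B) {c ρ : ℝ}
    (hc : ∀ u, |B u u u| ≤ c * ‖u‖ ^ 3) {u w : E} (hu : ‖u‖ = 1) (hw : ‖w‖ = 1)
    (huu : ∀ z, B u u z = ρ * ⟪w, z⟫_ℝ) (huw : ∀ z, B u w z = ρ * ⟪u, z⟫_ℝ) : ρ ≤ c := by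
  set c₀ := ⟪u, w⟫_ℝ
  set p := w - c₀ • u
  have hup : ⟪u, p⟫_ℝ = 0 := by simp [p, inner_sub_right, real_inner_smul_right, hu, c₀]
  have hwp : ⟪w, p⟫_ℝ = 1 - c₀ ^ 2 := by
    simp only [p, inner_sub_right, real_inner_smul_right, real_inner_self_eq_norm_sq, hw,
      real_inner_comm w u, c₀]
    ring
  have hpp : ‖p‖ ^ 2 = 1 - c₀ ^ 2 := by
    rw [← real_inner_self_eq_norm_sq, ← hwp]
    conv_lhs => rw [show p = w - c₀ • u from rfl]
    rw [inner_sub_left, real_inner_smul_left, hup, mul_zero, sub_zero]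
  have hc₀ : |c₀| ≤ 1 := by simpa [hu, hw] using abs_real_inner_le_norm u w
  have huuu : B u u u = ρ * c₀ := by rw [huu, real_inner_comm]
  rcases eq_or_ne p 0 with hp | hp
  · have habs : |c₀| = 1 := by
      rw [hp, norm_zero] at hpp
      nlinarith [abs_nonneg c₀, sq_abs c₀]
    calc ρ = B u u w := by rw [huu, real_inner_self_eq_norm_sq, hw]; ring
      _ = c₀ * B u u u := by rw [sub_eq_zero.mp hp, map_smul, smul_eq_mul]
      _ ≤ |B u u u| := by
        have := le_abs_self (c₀ * B u u u)
        rwa [abs_mul, habs, one_mul] at this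
      _ ≤ c := by simpa [hu] using hc u
  have hm : 0 < ‖p‖ := norm_pos_iff.mpr hp
  set m := ‖p‖
  set v := m⁻¹ • p
  have hv : ‖v‖ = 1 := by rw [norm_smul, norm_inv, norm_norm, inv_mul_cancel₀ hm.ne']
  have huv : ⟪u, v⟫_ℝ = 0 := by rw [real_inner_smul_right, hup, mul_zero]
  have huuv : B u u v = ρ * m := by
    rw [huu, real_inner_smul_right, hwp, ← hpp]
    field_simp
  have huvv : B u v v = -(ρ * c₀) := by
    have : B u v v = m⁻¹ * (B u w v - c₀ * B u u v) := by
      simp only [v, p, map_smul, map_sub, LinearMap.smul_apply, LinearMap.sub_apply, smul_eq_mul]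
      ring
    rw [this, huw, huv, huuv]
    field_simp
    ring
  have hcos : cos (arccos c₀) = c₀ := cos_arccos (neg_le_of_abs_le hc₀) (le_of_abs_le hc₀)
  have hsin : sin (arccos c₀) = m := by rw [sin_arccos, ← hpp, Real.sqrt_sq hm.le]
  exact hB.le_of_orthonormal hc hu hv huv (arccos_nonneg c₀) (arccos_le_pi c₀)
    (by rw [hcos, huuu]) (by rw [hsin, huuv]) (by rw [hcos, huvv])

/-- Banach's theorem for symmetric trilinear forms. The proof maximizes `B a a b` over pairs of
unit vectors; at a maximizer both `B u u` and `B u w` are norming functionals, which pins them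
down and reduces the claim to the plane case. -/
theorem IsSymmTrilinear.abs_apply_le [FiniteDimensional ℝ E] (hB : IsSymmTrilinear B) {c : ℝ}
    (hc : ∀ u, |B u u u| ≤ c * ‖u‖ ^ 3) (x y : E) : |B x x y| ≤ c * (‖x‖ ^ 2 * ‖y‖) := by
  rcases subsingleton_or_nontrivial E with hE | hE
  · simp [Subsingleton.elim x 0]
  have hsphere := NormedSpace.sphere_nonempty (x := (0 : E)).mpr zero_le_one
  have hcont : Continuous fun q : E × E => B q.1 q.1 q.2 := by
    let B' := (B.compr₂ (LinearMap.toContinuousLinearMap :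
      (E →ₗ[ℝ] ℝ) ≃ₗ[ℝ] E →L[ℝ] ℝ).toLinearMap).toContinuousBilinearMap
    show Continuous fun q : E × E => B' q.1 q.1 q.2
    fun_prop
  obtain ⟨⟨u, w⟩, ⟨hu, hw⟩, hmax⟩ := ((isCompact_sphere (0 : E) 1).prod
    (isCompact_sphere 0 1)).exists_isMaxOn (hsphere.prod hsphere) hcont.continuousOn
  simp only [mem_sphere_zero_iff_norm] at hu hw
  set ρ := B u u w
  have hρ : ∀ a b : E, ‖a‖ = 1 → ‖b‖ = 1 → |B a a b| ≤ ρ := by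
    have hle : ∀ a b : E, ‖a‖ = 1 → ‖b‖ = 1 → B a a b ≤ ρ := fun a b ha hb =>
      hmax (Set.mk_mem_prod (by simpa using ha) (by simpa using hb))
    intro a b ha hb
    have := hle a (-b) ha (by rwa [norm_neg])
    rw [map_neg] at this
    exact abs_le.mpr ⟨by linarith, hle a b ha hb⟩
  have hhom := B.abs_apply_le_of_forall_norm_eq_one hρ
  suffices hρc : ρ ≤ c from (hhom x y).trans (by gcongr)
  refine hB.le_of_apply_eq_mul_inner hc hu hw
    ((B u u).apply_eq_mul_inner_of_le_of_apply_eq hw rfl fun y hy =>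
      (le_abs_self _).trans (hρ u y hu hy))
    ((B u w).apply_eq_mul_inner_of_le_of_apply_eq hu (hB.2 u w u) fun y hy => ?_)
  have hpol : 4 * B u w y = B (y + u) (y + u) w - B (y - u) (y - u) w := by
    simp only [map_add, map_sub, LinearMap.add_apply, LinearMap.sub_apply]
    rw [hB.2 u w y, hB.1 u y w]
    ring
  have hadd := (abs_le.mp (hhom (y + u) w)).2
  have hsub := (abs_le.mp (hhom (y - u) w)).1
  have hpar := parallelogram_law_with_norm ℝ y u
  rw [hw, mul_one] at hadd hsub
  rw [hy, hu] at hpar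
  linarith [congrArg (ρ * ·) hpar]

end InnerProductSpace

section LocalNorm

open scoped InnerProductSpace

variable {d : ℕ}

theorem qnorm_nonneg (H : Matrix (Fin d) (Fin d) ℝ) (v : Fin d → ℝ) : 0 ≤ qnorm H v :=
  Real.sqrt_nonneg _

theorem qnorm_neg (H : Matrix (Fin d) (Fin d) ℝ) (v : Fin d → ℝ) : qnorm H (-v) = qnorm H v := by
  simp [qnorm, mulVec_neg]

theorem Matrix.PosDef.qnorm_mulVec_inv {H : Matrix (Fin d) (Fin d) ℝ} (hH : H.PosDef)
    (u : Fin d → ℝ) : qnorm H (H⁻¹ *ᵥ u) = qnorm H⁻¹ u := by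
  have hdet : IsUnit H.det := isUnit_iff_ne_zero.mpr hH.det_pos.ne'
  rw [qnorm, qnorm, mulVec_mulVec, mul_nonsing_inv _ hdet, one_mulVec, dotProduct_comm]

/-- `Fin d → ℝ` with the inner product `⟪x, y⟫ = xᵀ H y`. It is a type synonym so that this
inner product does not clash with the sup norm instance on `Fin d → ℝ`. -/
def LocalNormSpace (_H : Matrix (Fin d) (Fin d) ℝ) : Type := Fin d → ℝ

namespace LocalNormSpace

variable (H : Matrix (Fin d) (Fin d) ℝ) [Fact H.PosDef]

noncomputable instance : NormedAddCommGroup (LocalNormSpace H) :=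
  H.toNormedAddCommGroup Fact.out

noncomputable instance : InnerProductSpace ℝ (LocalNormSpace H) :=
  H.toInnerProductSpace (Fact.out : H.PosDef).posSemidef

instance : FiniteDimensional ℝ (LocalNormSpace H) :=
  inferInstanceAs (FiniteDimensional ℝ (Fin d → ℝ))

theorem inner_eq (x y : LocalNormSpace H) : ⟪x, y⟫_ℝ = x ⬝ᵥ H *ᵥ y := dotProduct_comm _ _

theorem norm_eq (x : LocalNormSpace H) : ‖x‖ = qnorm H x := by
  rw [norm_eq_sqrt_real_inner, inner_eq H]
  rfl

end LocalNormSpace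

variable {H : Matrix (Fin d) (Fin d) ℝ}

theorem abs_dotProduct_mulVec_le (hH : H.PosDef) (x y : Fin d → ℝ) :
    |x ⬝ᵥ H *ᵥ y| ≤ qnorm H x * qnorm H y := by
  have : Fact H.PosDef := ⟨hH⟩
  have h := abs_real_inner_le_norm (F := LocalNormSpace H) x y
  rwa [LocalNormSpace.inner_eq H x y, LocalNormSpace.norm_eq H x, LocalNormSpace.norm_eq H y] at h

theorem IsSymmTrilinear.abs_apply_le_qnorm
    {B : (Fin d → ℝ) →ₗ[ℝ] (Fin d → ℝ) →ₗ[ℝ] (Fin d → ℝ) →ₗ[ℝ] ℝ} (hB : IsSymmTrilinear B)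
    (hH : H.PosDef) {c : ℝ} (hc : ∀ u, |B u u u| ≤ c * qnorm H u ^ 3) (x y : Fin d → ℝ) :
    |B x x y| ≤ c * (qnorm H x ^ 2 * qnorm H y) := by
  have : Fact H.PosDef := ⟨hH⟩
  have h := IsSymmTrilinear.abs_apply_le (E := LocalNormSpace H) (B := B) hB
    (fun u => by rw [LocalNormSpace.norm_eq H u]; exact hc u) x y
  rwa [LocalNormSpace.norm_eq H x, LocalNormSpace.norm_eq H y] at h

end LocalNorm

section ThirdDerivative

variable {E F : Type*} [NormedAddCommGroup E] [NormedSpace ℝ E] [NormedAddCommGroup F]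
  [NormedSpace ℝ F] {f : E → F} {x : E}

theorem iteratedFDeriv_three_apply (f : E → F) (x : E) (m : Fin 3 → E) :
    iteratedFDeriv ℝ 3 f x m = fderiv ℝ (fderiv ℝ (fderiv ℝ f)) x (m 0) (m 1) (m 2) := by
  rw [iteratedFDeriv_succ_apply_right, iteratedFDeriv_two_apply]
  rfl

theorem DifferentiableAt.fderiv_apply_apply {G : E → E →L[ℝ] E →L[ℝ] F}
    (hG : DifferentiableAt ℝ G x) (a b c : E) :
    fderiv ℝ (fun y => G y b c) x a = fderiv ℝ G x a b c := by
  rw [((hG.hasFDerivAt.clm_apply (hasFDerivAt_const b x)).clm_apply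
    (hasFDerivAt_const c x)).fderiv]
  simp

theorem ContDiffAt.differentiableAt_fderiv_fderiv (hf : ContDiffAt ℝ 3 f x) :
    DifferentiableAt ℝ (fderiv ℝ (fderiv ℝ f)) x :=
  ((hf.fderiv_right (m := 2) (by norm_num)).fderiv_right (m := 1) (by norm_num)).differentiableAt
    one_ne_zero

theorem ContDiffAt.fderiv_fderiv_fderiv_swap_left (hf : ContDiffAt ℝ 3 f x) (a b c : E) :
    fderiv ℝ (fderiv ℝ (fderiv ℝ f)) x a b c = fderiv ℝ (fderiv ℝ (fderiv ℝ f)) x b a c :=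
  congrArg (· c) ((hf.fderiv_right (m := 2) (by norm_num)).isSymmSndFDerivAt (by simp) a b)

theorem ContDiffAt.fderiv_fderiv_fderiv_swap_right (hf : ContDiffAt ℝ 3 f x) (a b c : E) :
    fderiv ℝ (fderiv ℝ (fderiv ℝ f)) x a b c = fderiv ℝ (fderiv ℝ (fderiv ℝ f)) x a c b := by
  have hsymm : (fun y => fderiv ℝ (fderiv ℝ f) y b c) =ᶠ[𝓝 x]
      fun y => fderiv ℝ (fderiv ℝ f) y c b := by
    filter_upwards [hf.eventually (by simp)] with y hy
    exact hy.isSymmSndFDerivAt (by simp only [minSmoothness_of_isRCLikeNormedField]; norm_num) b c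
  rw [← hf.differentiableAt_fderiv_fderiv.fderiv_apply_apply,
    ← hf.differentiableAt_fderiv_fderiv.fderiv_apply_apply, hsymm.fderiv_eq]

theorem ContDiffAt.isSymmTrilinear_fderiv_fderiv_fderiv {f : E → ℝ} (hf : ContDiffAt ℝ 3 f x) :
    IsSymmTrilinear ((fderiv ℝ (fderiv ℝ (fderiv ℝ f)) x).toLinearMap₁₂.compr₂
      (ContinuousLinearMap.coeLM ℝ)) :=
  ⟨hf.fderiv_fderiv_fderiv_swap_left, hf.fderiv_fderiv_fderiv_swap_right⟩

theorem DifferentiableAt.hasDerivAt_comp_add_smul {G : E → F} {h : E} {t : ℝ}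
    (hG : DifferentiableAt ℝ G (x + t • h)) :
    HasDerivAt (fun s : ℝ => G (x + s • h)) (fderiv ℝ G (x + t • h) h) t := by
  have := hG.hasFDerivAt.comp_hasDerivAt t (((hasDerivAt_id t).smul_const h).const_add x)
  simpa [Function.comp_def] using this

theorem DifferentiableAt.hasDerivAt_apply_comp_add_smul {G : E → E →L[ℝ] F} {h : E} {t : ℝ}
    (hG : DifferentiableAt ℝ G (x + t • h)) (b : E) :
    HasDerivAt (fun s : ℝ => G (x + s • h) b) (fderiv ℝ G (x + t • h) h b) t := by
  simpa using hG.hasDerivAt_comp_add_smul.clm_apply (hasDerivAt_const t b)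

theorem DifferentiableAt.hasDerivAt_apply_apply_comp_add_smul {G : E → E →L[ℝ] E →L[ℝ] F}
    {h : E} {t : ℝ} (hG : DifferentiableAt ℝ G (x + t • h)) (b c : E) :
    HasDerivAt (fun s : ℝ => G (x + s • h) b c) (fderiv ℝ G (x + t • h) h b c) t := by
  simpa using (hG.hasDerivAt_apply_comp_add_smul b).clm_apply (hasDerivAt_const t c)

end ThirdDerivative

namespace SelfConcordantWith

open Set

variable {d : ℕ} {K : Set (Fin d → ℝ)} {f : (Fin d → ℝ) → ℝ}
  {hess : (Fin d → ℝ) → Matrix (Fin d) (Fin d) ℝ} {M : ℝ}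

theorem contDiffAt (hsc : SelfConcordantWith K f hess M) {y : Fin d → ℝ} (hy : y ∈ interior K) :
    ContDiffAt ℝ 3 f y :=
  hsc.2.1.contDiffAt (isOpen_interior.mem_nhds hy)

theorem fderiv_fderiv_apply (hsc : SelfConcordantWith K f hess M) {y : Fin d → ℝ}
    (hy : y ∈ interior K) (a b : Fin d → ℝ) :
    fderiv ℝ (fderiv ℝ f) y a b = a ⬝ᵥ hess y *ᵥ b := by
  have hdiag : ∀ u, fderiv ℝ (fderiv ℝ f) y u u = u ⬝ᵥ hess y *ᵥ u := fun u => by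
    rw [← hsc.2.2.2.1 y hy u, iteratedFDeriv_two_apply]
  have hQ := (hsc.contDiffAt hy).isSymmSndFDerivAt
    (by simp only [minSmoothness_of_isRCLikeNormedField]; norm_num) b a
  have hH : b ⬝ᵥ hess y *ᵥ a = a ⬝ᵥ hess y *ᵥ b := by
    have hT : (hess y)ᵀ = hess y := by
      simpa [conjTranspose_eq_transpose_of_trivial] using (hsc.2.2.1 y hy).eq
    rw [dotProduct_mulVec, ← mulVec_transpose, hT, dotProduct_comm]
  have := hdiag (a + b)
  simp only [map_add, _root_.add_apply, mulVec_add, dotProduct_add, add_dotProduct, hdiag, hQ,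
    hH] at this
  linarith

theorem abs_fderiv_fderiv_fderiv_le (hsc : SelfConcordantWith K f hess M) {y : Fin d → ℝ}
    (hy : y ∈ interior K) (hpd : (hess y).PosDef) (h v : Fin d → ℝ) :
    |fderiv ℝ (fderiv ℝ (fderiv ℝ f)) y h v v|
      ≤ 2 * M * (qnorm (hess y) v ^ 2 * qnorm (hess y) h) := by
  have hf := hsc.contDiffAt hy
  rw [hf.fderiv_fderiv_fderiv_swap_left, hf.fderiv_fderiv_fderiv_swap_right]
  refine hf.isSymmTrilinear_fderiv_fderiv_fderiv.abs_apply_le_qnorm hpd (fun u => ?_) v h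
  simpa [iteratedFDeriv_three_apply] using hsc.2.2.2.2.2 y hy u

variable {x h : Fin d → ℝ}

theorem qnorm_hess_add_smul_self_le (hsc : SelfConcordantWith K f hess M)
    (hpd : ∀ y ∈ interior K, (hess y).PosDef)
    (hseg : ∀ t ∈ Icc (0 : ℝ) 1, x + t • h ∈ interior K) (hMr : M * qnorm (hess x) h < 1)
    {t : ℝ} (ht : t ∈ Icc (0 : ℝ) 1) :
    qnorm (hess (x + t • h)) h ≤ qnorm (hess x) h / (1 - t * (M * qnorm (hess x) h)) := by
  rcases eq_or_ne h 0 with rfl | hh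
  · simp [qnorm]
  have h0 : (0 : ℝ) ∈ Icc (0 : ℝ) 1 := ⟨le_rfl, zero_le_one⟩
  have hx : x + (0 : ℝ) • h = x := by rw [zero_smul, add_zero]
  set β := fun τ : ℝ => fderiv ℝ (fderiv ℝ f) (x + τ • h) h h
  have hβ : ∀ τ ∈ Icc (0 : ℝ) 1, √(β τ) = qnorm (hess (x + τ • h)) h := fun τ hτ => by
    simp only [β, hsc.fderiv_fderiv_apply (hseg τ hτ), qnorm]
  have hβpos : ∀ τ ∈ Icc (0 : ℝ) 1, 0 < β τ := fun τ hτ => by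
    simpa [β, hsc.fderiv_fderiv_apply (hseg τ hτ)] using
      (hpd _ (hseg τ hτ)).dotProduct_mulVec_pos hh
  have hderiv : ∀ τ ∈ Icc (0 : ℝ) 1, HasDerivAt (fun τ => √(β τ))
      (fderiv ℝ (fderiv ℝ (fderiv ℝ f)) (x + τ • h) h h h / (2 * √(β τ))) τ := fun τ hτ =>
    ((hsc.contDiffAt (hseg τ hτ)).differentiableAt_fderiv_fderiv.hasDerivAt_apply_apply_comp_add_smul
      h h).sqrt (hβpos τ hτ).ne'
  have hbound : ∀ τ ∈ Icc (0 : ℝ) 1,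
      fderiv ℝ (fderiv ℝ (fderiv ℝ f)) (x + τ • h) h h h / (2 * √(β τ)) ≤ M * √(β τ) ^ 2 := by
    intro τ hτ
    have hs := Real.sqrt_pos.2 (hβpos τ hτ)
    have := (le_abs_self _).trans
      (hsc.abs_fderiv_fderiv_fderiv_le (hseg τ hτ) (hpd _ (hseg τ hτ)) h h)
    rw [← hβ τ hτ] at this
    rw [div_le_iff₀ (by positivity)]
    nlinarith
  have := le_div_one_sub_mul_of_hasDerivAt hderiv (fun τ hτ => Real.sqrt_pos.2 (hβpos τ hτ))
    hbound (by rwa [hβ 0 h0, hx]) ht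
  rwa [hβ t ht, hβ 0 h0, hx] at this

theorem qnorm_hess_add_smul_le (hsc : SelfConcordantWith K f hess M)
    (hpd : ∀ y ∈ interior K, (hess y).PosDef)
    (hseg : ∀ t ∈ Icc (0 : ℝ) 1, x + t • h ∈ interior K) (hM : 0 ≤ M)
    (hMr : M * qnorm (hess x) h < 1) (v : Fin d → ℝ) {t : ℝ} (ht : t ∈ Icc (0 : ℝ) 1) :
    qnorm (hess (x + t • h)) v ≤ qnorm (hess x) v / (1 - t * (M * qnorm (hess x) h)) := by
  set r := qnorm (hess x) h
  have h0 : (0 : ℝ) ∈ Icc (0 : ℝ) 1 := ⟨le_rfl, zero_le_one⟩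
  have hx : x + (0 : ℝ) • h = x := by rw [zero_smul, add_zero]
  set α := fun τ : ℝ => fderiv ℝ (fderiv ℝ f) (x + τ • h) v v
  have hα : ∀ τ ∈ Icc (0 : ℝ) 1, α τ = qnorm (hess (x + τ • h)) v ^ 2 := fun τ hτ => by
    rw [qnorm, Real.sq_sqrt]
    · exact hsc.fderiv_fderiv_apply (hseg τ hτ) v v
    · simpa using (hpd _ (hseg τ hτ)).posSemidef.dotProduct_mulVec_nonneg v
  have hderiv : ∀ τ ∈ Icc (0 : ℝ) 1,
      HasDerivAt α (fderiv ℝ (fderiv ℝ (fderiv ℝ f)) (x + τ • h) h v v) τ := fun τ hτ =>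
    (hsc.contDiffAt (hseg τ hτ)).differentiableAt_fderiv_fderiv.hasDerivAt_apply_apply_comp_add_smul
      v v
  have hbound : ∀ τ ∈ Icc (0 : ℝ) 1, fderiv ℝ (fderiv ℝ (fderiv ℝ f)) (x + τ • h) h v v *
      (1 - τ * (M * r)) ≤ 2 * (M * r) * α τ := by
    intro τ hτ
    have hκ := one_sub_mul_pos_of_mem_Icc hMr hτ
    have h3 := (le_abs_self _).trans
      (hsc.abs_fderiv_fderiv_fderiv_le (hseg τ hτ) (hpd _ (hseg τ hτ)) h v)
    have hh := hsc.qnorm_hess_add_smul_self_le hpd hseg hMr hτ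
    rw [le_div_iff₀ hκ] at hh
    rw [hα τ hτ]
    have hαnn : 0 ≤ M * qnorm (hess (x + τ • h)) v ^ 2 := by positivity
    nlinarith [mul_le_mul_of_nonneg_left hh hαnn]
  have key := mul_one_sub_mul_sq_le_of_hasDerivAt hderiv hMr hbound ht
  rw [hα t ht, hα 0 h0, hx, ← mul_pow] at key
  have hκ := one_sub_mul_pos_of_mem_Icc hMr ht
  rw [le_div_iff₀ hκ]
  exact (pow_le_pow_iff_left₀ (mul_nonneg (qnorm_nonneg _ _) hκ.le) (qnorm_nonneg _ _)
    two_ne_zero).mp key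

theorem abs_fderiv_add_sub_le (hsc : SelfConcordantWith K f hess M)
    (hpd : ∀ y ∈ interior K, (hess y).PosDef)
    (hseg : ∀ t ∈ Icc (0 : ℝ) 1, x + t • h ∈ interior K) (hM : 0 ≤ M)
    (hMr : M * qnorm (hess x) h < 1) (v : Fin d → ℝ) :
    |fderiv ℝ f (x + h) v - fderiv ℝ f x v|
      ≤ qnorm (hess x) h * qnorm (hess x) v / (1 - M * qnorm (hess x) h) := by
  set r := qnorm (hess x) h
  have hderiv : ∀ τ ∈ Icc (0 : ℝ) 1, HasDerivAt (fun τ => fderiv ℝ f (x + τ • h) v)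
      (fderiv ℝ (fderiv ℝ f) (x + τ • h) h v) τ := fun τ hτ =>
    (((hsc.contDiffAt (hseg τ hτ)).fderiv_right (m := 2) (by norm_num)).differentiableAt
      (by norm_num)).hasDerivAt_apply_comp_add_smul v
  have hbound : ∀ τ ∈ Icc (0 : ℝ) 1, |fderiv ℝ (fderiv ℝ f) (x + τ • h) h v|
      ≤ r * qnorm (hess x) v / (1 - τ * (M * r)) ^ 2 := by
    intro τ hτ
    rw [hsc.fderiv_fderiv_apply (hseg τ hτ), sq, ← div_mul_div_comm]
    exact (abs_dotProduct_mulVec_le (hpd _ (hseg τ hτ)) h v).trans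
      (mul_le_mul (hsc.qnorm_hess_add_smul_self_le hpd hseg hMr hτ)
        (hsc.qnorm_hess_add_smul_le hpd hseg hM hMr v hτ) (qnorm_nonneg _ _)
        (div_nonneg (qnorm_nonneg _ _) (one_sub_mul_pos_of_mem_Icc hMr hτ).le))
  simpa using abs_sub_le_div_one_sub_of_hasDerivAt hderiv hMr hbound

end SelfConcordantWith

/-- gradient stability of a self-concordant function. If
`r = ‖x - w‖_{∇²f(x)} < 1/M_f` then
`‖∇f(x) - ∇f(w)‖²_{∇²f(x)⁻¹} ≤ (1/(1 - M_f·r))²·‖w - x‖²_{∇²f(x)}`. -/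
theorem gradient_stability {d : ℕ} (K : Set (Fin d → ℝ)) (hK : Convex ℝ K)
    (f : (Fin d → ℝ) → ℝ) (grad : (Fin d → ℝ) → (Fin d → ℝ))
    (hess : (Fin d → ℝ) → Matrix (Fin d) (Fin d) ℝ) (M : ℝ)
    (hM : 0 < M) (hsc : SelfConcordantWith K f hess M) (hgrad : GradOf K f grad)
    (hpd : ∀ x ∈ interior K, (hess x).PosDef)
    (x : Fin d → ℝ) (hx : x ∈ interior K) (w : Fin d → ℝ) (hw : w ∈ interior K)
    (r : ℝ) (hr_def : r = qnorm (hess x) (x - w)) (hr : r < 1 / M) :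
    qnorm (hess x)⁻¹ (grad x - grad w) ^ 2
      ≤ (1 / (1 - M * r)) ^ 2 * qnorm (hess x) (w - x) ^ 2 := by
  have hr' : qnorm (hess x) (w - x) = r := by rw [hr_def, ← neg_sub, qnorm_neg]
  have hMr : M * r < 1 := by rwa [lt_div_iff₀ hM, mul_comm] at hr
  set u := grad x - grad w
  have hN : qnorm (hess x)⁻¹ u ^ 2 = u ⬝ᵥ (hess x)⁻¹ *ᵥ u :=
    Real.sq_sqrt (by simpa using (hpd x hx).inv.posSemidef.dotProduct_mulVec_nonneg u)
  have hκ : 0 < 1 - M * r := by linarith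
  have key := hsc.abs_fderiv_add_sub_le hpd (fun t ht => hK.interior.add_smul_sub_mem hx hw ht)
    hM.le (hr' ▸ hMr) ((hess x)⁻¹ *ᵥ u)
  rw [add_sub_cancel, hgrad w hw, hgrad x hx, abs_sub_comm, ← sub_dotProduct, ← hN, abs_sq,
    (hpd x hx).qnorm_mulVec_inv, hr', le_div_iff₀ hκ] at key
  set N := qnorm (hess x)⁻¹ u
  have hN0 : 0 ≤ N := qnorm_nonneg _ _
  have hNr : N * (1 - M * r) ≤ r := by
    rcases hN0.eq_or_lt with h | h
    · rw [← h, zero_mul, ← hr']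
      exact qnorm_nonneg _ _
    · exact le_of_mul_le_mul_left (by linarith) h
  rw [hr']
  calc N ^ 2 = (1 / (1 - M * r)) ^ 2 * (N * (1 - M * r)) ^ 2 := by field_simp
    _ ≤ (1 / (1 - M * r)) ^ 2 * r ^ 2 := by gcongr
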